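/- For any simplicial complex X and any p-simplex τ of the r-tupling Dʳ(X), the link of τ in Dʳ(X) is isomorphic to the r-tupling of the link in X of the underlying ((p+1)r−1)-simplex δ(τ): Link_{Dʳ(X)}(τ) ≅ Dʳ(Link_X(δ(τ))). -/

import Mathlib

open CategoryTheory

/-- An abstract simplicial complex on a vertex type `V`: a collection of nonempty
finite subsets of `V` closed under passing to nonempty subsets. -/
structure ASC (V : Type) [DecidableEq V] where
  faces : Set (Finset V)
  nonempty_of_mem : ∀ s ∈ faces, s.Nonempty
  down_closed : ∀ s ∈ faces, ∀ t ⊆ s, t.Nonempty → t ∈ faces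

namespace ASC

variable {V W : Type} [DecidableEq V] [DecidableEq W]

/-- The vertex set of a simplicial complex. -/
def verts (X : ASC V) : Set V := {v | {v} ∈ X.faces}

/-- The full simplex on a (finite) vertex type; `simplexOn (Fin (n+1))` is `Δⁿ`. -/
def simplexOn (V : Type) [DecidableEq V] : ASC V where
  faces := {s | s.Nonempty}
  nonempty_of_mem := fun _ h => h
  down_closed := fun _ _ _ _ h => h

/-- The link of a (possible) simplex `σ`: all faces disjoint from `σ` whose union
with `σ` is again a face. -/
def link (X : ASC V) (σ : Finset V) : ASC V where
  faces := {t | t ∈ X.faces ∧ Disjoint t σ ∧ t ∪ σ ∈ X.faces}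
  nonempty_of_mem := fun s hs => X.nonempty_of_mem s hs.1
  down_closed := by
    rintro s ⟨hs, hd, hu⟩ t hts ht
    refine ⟨X.down_closed s hs t hts ht, hd.mono_left hts, ?_⟩
    exact X.down_closed _ hu _ (Finset.union_subset_union_left hts)
      ⟨ht.choose, Finset.mem_union_left _ ht.choose_spec⟩

/-- The `r`-tupling `Dʳ(X)` of a simplicial complex `X`: vertices are the
`(r-1)`-simplices of `X` (faces with `r` vertices), and a collection of such is a
simplex iff they are pairwise disjoint and their union is a face of `X`. -/
def tupling (X : ASC V) (r : ℕ) : ASC (Finset V) where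
  faces := {S | S.Nonempty ∧ (∀ τ ∈ S, τ ∈ X.faces ∧ τ.card = r) ∧
      ((S : Set (Finset V)).Pairwise Disjoint) ∧ S.biUnion id ∈ X.faces}
  nonempty_of_mem := fun _ h => h.1
  down_closed := by
    rintro S ⟨hS, hmem, hdisj, hun⟩ T hTS hT
    refine ⟨hT, fun τ hτ => hmem τ (hTS hτ), hdisj.mono (by exact_mod_cast hTS), ?_⟩
    refine X.down_closed _ hun _ (Finset.biUnion_subset_biUnion_of_subset_left _ hTS) ?_
    obtain ⟨τ, hτ⟩ := hT
    obtain ⟨v, hv⟩ := X.nonempty_of_mem τ (hmem τ (hTS hτ)).1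
    exact ⟨v, Finset.mem_biUnion.2 ⟨τ, hτ, hv⟩⟩

/-- The double of a simplicial complex. -/
def double (X : ASC V) : ASC (Finset V) := X.tupling 2

/-- The underlying face poset of a simplicial complex, ordered by inclusion. -/
def facePoset (X : ASC V) : Type := {s : Finset V // s ∈ X.faces}

instance (X : ASC V) : PartialOrder X.facePoset :=
  Subtype.partialOrder _

/-- The geometric realization of a simplicial complex, realized as the geometric
realization of the nerve of its face poset (i.e. of its barycentric subdivision). -/
noncomputable def space (X : ASC V) : TopCat :=
  SSet.toTop.obj (nerve X.facePoset)

end ASC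

/-- A topological space is `k`-connected (`k : ℤ`) if it is nonempty (for `k ≥ -1`)
and all its homotopy groups `π_i` for `i ≤ k` are trivial. -/
def IsNConnected (k : ℤ) (T : Type*) [TopologicalSpace T] : Prop :=
  (-1 ≤ k → Nonempty T) ∧
    ∀ (n : ℕ) (x : T), (n : ℤ) ≤ k → Subsingleton (HomotopyGroup (Fin n) T x)

/-- A simplicial complex is weakly Cohen–Macaulay of dimension `n` if it is
`(n-1)`-connected and the link of every `p`-simplex is `(n-p-2)`-connected. -/
def IsWCM {V : Type} [DecidableEq V] (X : ASC V) (n : ℤ) : Prop :=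
  IsNConnected (n - 1) X.space ∧
    ∀ s ∈ X.faces, IsNConnected (n - s.card - 1) (X.link s).space

namespace ASC

variable {V W : Type} [DecidableEq V] [DecidableEq W]

/-- An isomorphism of simplicial complexes: a bijection between the vertex sets
carrying simplices to simplices in both directions. -/
structure Iso (X : ASC V) (Y : ASC W) where
  toEquiv : X.verts ≃ Y.verts
  map_faces : ∀ s : Finset X.verts,
    s.image Subtype.val ∈ X.faces ↔ (s.image toEquiv).image Subtype.val ∈ Y.faces

/-- `X_m`: the order complex of the poset of simplices of `X` with at least `m`
vertices, ordered by inclusion. -/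
def ordered (X : ASC V) (m : ℕ) : ASC (Finset V) where
  faces := {S | S.Nonempty ∧ (∀ s ∈ S, s ∈ X.faces ∧ m ≤ s.card) ∧
      IsChain (· ⊆ ·) (S : Set (Finset V))}
  nonempty_of_mem := fun _ h => h.1
  down_closed := by
    rintro S ⟨hS, hmem, hchain⟩ T hTS hT
    exact ⟨hT, fun s hs => hmem s (hTS hs),
      fun a ha b hb hab => hchain (hTS ha) (hTS hb) hab⟩

/-- The subcomplex of `X_m` consisting of chains of simplices of `X` (with at
least `m` vertices is not imposed here; any predicate `P` cuts out a region). -/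
def regionComplex (X : ASC V) (P : Finset V → Prop) : ASC (Finset V) where
  faces := {S | S.Nonempty ∧ (∀ s ∈ S, s ∈ X.faces ∧ P s) ∧
      IsChain (· ⊆ ·) (S : Set (Finset V))}
  nonempty_of_mem := fun _ h => h.1
  down_closed := by
    rintro S ⟨hS, hmem, hchain⟩ T hTS hT
    exact ⟨hT, fun s hs => hmem s (hTS hs),
      fun a ha b hb hab => hchain (hTS ha) (hTS hb) hab⟩

/-- The join of a finite family of simplicial complexes on a common vertex type:
simplices are the (nonempty) unions of one simplex-or-empty-set from each factor. -/
def joinFam {ι : Type} [Fintype ι] [DecidableEq ι] (Y : ι → ASC V) : ASC V where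
  faces := {s | s.Nonempty ∧ ∃ f : ι → Finset V,
      (∀ i, f i = ∅ ∨ f i ∈ (Y i).faces) ∧ s = Finset.univ.biUnion f}
  nonempty_of_mem := fun _ h => h.1
  down_closed := by
    rintro s ⟨-, f, hf, rfl⟩ t hts ht
    refine ⟨ht, fun i => f i ∩ t, fun i => ?_, ?_⟩
    · by_cases h : (f i ∩ t).Nonempty
      · rcases hf i with h' | h'
        · simp [h'] 
        · exact Or.inr ((Y i).down_closed _ h' _ Finset.inter_subset_left h)
      · exact Or.inl (Finset.not_nonempty_iff_eq_empty.1 h)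
    · ext a
      simp only [Finset.mem_biUnion, Finset.mem_univ, true_and, Finset.mem_inter]
      constructor
      · intro hat
        obtain ⟨i, -, hai⟩ := Finset.mem_biUnion.1 (hts hat)
        exact ⟨i, hai, hat⟩
      · rintro ⟨i, -, hat⟩; exact hat

/-- The boundary `∂Δᵏ` of the `k`-simplex: all nonempty proper subsets of the
`k+1` vertices. -/
def boundary (k : ℕ) : ASC (Fin (k + 1)) where
  faces := {s | s.Nonempty ∧ s ≠ Finset.univ}
  nonempty_of_mem := fun _ h => h.1
  down_closed := by
    rintro s ⟨-, hs⟩ t hts ht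
    refine ⟨ht, fun h => hs ?_⟩
    subst h
    exact Finset.univ_subset_iff.1 hts

end ASC

/-- The matching complex of a simple graph: vertices the edges (as 2-element
vertex sets), simplices the collections of pairwise disjoint edges. -/
def matchingComplex {V : Type} [DecidableEq V] (G : SimpleGraph V) : ASC (Finset V) where
  faces := {S | S.Nonempty ∧ (∀ e ∈ S, ∃ a b, G.Adj a b ∧ e = {a, b}) ∧
      (S : Set (Finset V)).Pairwise Disjoint}
  nonempty_of_mem := fun _ h => h.1
  down_closed := by
    rintro S ⟨hS, hmem, hdisj⟩ T hTS hT
    exact ⟨hT, fun e he => hmem e (hTS he), hdisj.mono (by exact_mod_cast hTS)⟩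

/-- The `r`-hypergraph matching complex `M_m(r)`: vertices the `r`-element
subsets of an `m`-element set, simplices the collections of pairwise disjoint
such subsets. -/
def hypMatching (m r : ℕ) : ASC (Finset (Fin m)) where
  faces := {S | S.Nonempty ∧ (∀ e ∈ S, e.card = r) ∧
      (S : Set (Finset (Fin m))).Pairwise Disjoint}
  nonempty_of_mem := fun _ h => h.1
  down_closed := by
    rintro S ⟨hS, hmem, hdisj⟩ T hTS hT
    exact ⟨hT, fun e he => hmem e (hTS he), hdisj.mono (by exact_mod_cast hTS)⟩

open ASC

/-! The two complexes have literally the same faces. A family `S` of disjoint `r`-faces lies in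
the link of `τ` in `Dʳ(X)` iff `S ∪ τ` is a disjoint family with union a face, i.e. iff `⋃S` is
disjoint from `δ(τ)` and `⋃S ∪ δ(τ)` is a face of `X`; that says `⋃S` lies in the link of `δ(τ)`,
which contains each member of `S` by down-closure. -/

theorem Finset.disjoint_of_disjoint_biUnion_id {α : Type} [DecidableEq α]
    {S T : Finset (Finset α)} (hS : ∀ s ∈ S, s.Nonempty)
    (h : Disjoint (S.biUnion id) (T.biUnion id)) : Disjoint S T := by
  refine Finset.disjoint_left.2 fun s hsS hsT => ?_
  obtain ⟨a, ha⟩ := hS s hsS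
  exact Finset.disjoint_left.1 h (Finset.mem_biUnion.2 ⟨s, hsS, ha⟩)
    (Finset.mem_biUnion.2 ⟨s, hsT, ha⟩)

theorem Finset.pairwise_disjoint_union_iff {α : Type} [DecidableEq α]
    {S T : Finset (Finset α)} (h : Disjoint S T) :
    (↑(S ∪ T) : Set (Finset α)).Pairwise Disjoint ↔
      (↑S : Set (Finset α)).Pairwise Disjoint ∧ (↑T : Set (Finset α)).Pairwise Disjoint ∧
        Disjoint (S.biUnion id) (T.biUnion id) := by
  have hne : ∀ a ∈ S, ∀ b ∈ T, a ≠ b := fun a ha b hb hab =>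
    Finset.disjoint_left.1 h ha (hab ▸ hb)
  rw [Finset.coe_union, Set.pairwise_union_of_symm, Finset.disjoint_biUnion_left]
  simp only [Finset.mem_coe, Finset.disjoint_biUnion_right, id]
  exact and_congr_right' <| and_congr_right' <|
    forall₂_congr fun a ha => forall₂_congr fun b hb => imp_iff_right (hne a ha b hb)

namespace ASC

variable {V : Type} [DecidableEq V]

theorem ext_faces {X Y : ASC V} (h : X.faces = Y.faces) : X = Y := by
  cases X; cases Y; simpa using h

def Iso.refl (X : ASC V) : X.Iso X :=
  ⟨Equiv.refl _, fun _ => by simp⟩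

def Iso.ofEq {X Y : ASC V} (h : X = Y) : X.Iso Y :=
  h ▸ Iso.refl X

theorem link_tupling (X : ASC V) (r : ℕ) {τ : Finset (Finset V)}
    (hτ : ∀ t ∈ τ, t ∈ X.faces ∧ t.card = r) (hτd : (↑τ : Set (Finset V)).Pairwise Disjoint) :
    (X.tupling r).link τ = (X.link (τ.biUnion id)).tupling r := by
  refine ext_faces <| Set.ext fun S => ⟨?_, ?_⟩
  · rintro ⟨⟨hSne, hS, hSd, hSu⟩, hSτ, -, -, hUd, hUu⟩
    rw [Finset.union_biUnion] at hUu
    have hlink : S.biUnion id ∈ (X.link (τ.biUnion id)).faces :=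
      ⟨hSu, ((Finset.pairwise_disjoint_union_iff hSτ).1 hUd).2.2, hUu⟩
    refine ⟨hSne, fun σ hσ => ⟨?_, (hS σ hσ).2⟩, hSd, hlink⟩
    exact (X.link _).down_closed _ hlink σ (Finset.subset_biUnion_of_mem id hσ)
      (X.nonempty_of_mem σ (hS σ hσ).1)
  · rintro ⟨hSne, hS, hSd, hSu, hSδ, hSuδ⟩
    have hSτ : Disjoint S τ :=
      Finset.disjoint_of_disjoint_biUnion_id (fun σ hσ => X.nonempty_of_mem σ (hS σ hσ).1.1) hSδ
    refine ⟨⟨hSne, fun σ hσ => ⟨(hS σ hσ).1.1, (hS σ hσ).2⟩, hSd, hSu⟩, hSτ,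
      hSne.mono Finset.subset_union_left, ?_,
      (Finset.pairwise_disjoint_union_iff hSτ).2 ⟨hSd, hτd, hSδ⟩, ?_⟩
    · intro σ hσ
      rcases Finset.mem_union.1 hσ with hσ | hσ
      · exact ⟨(hS σ hσ).1.1, (hS σ hσ).2⟩
      · exact hτ σ hσ
    · rwa [Finset.union_biUnion]

end ASC

theorem statement3 {V : Type} [DecidableEq V] (X : ASC V) (r : ℕ)
    (τ : Finset (Finset V)) (hτ : τ ∈ (X.tupling r).faces) :
    Nonempty (((X.tupling r).link τ).Iso ((X.link (τ.biUnion id)).tupling r)) :=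
  ⟨Iso.ofEq (link_tupling X r hτ.2.1 hτ.2.2.1)⟩
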